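/- Let g = Σ_{ℓ=0}^{n} a_ℓ(x)·y^ℓ ∈ ℂ[[x]][y] with a_n ≠ 0 and 0 ≤ n < e_1. Then: (1) there is exactly one index τ_0 ∈ {0, …, n} with a_{τ_0} ≠ 0 and ϑ_{ι_1}(g) = ϑ_{ι_1}(a_{τ_0}·y^{τ_0}); (2) for every j = 1, …, s, ϑ_{ι_j}(g) = (e_j/e_1)·ϑ_{ι_1}(g); (3) if τ_0 ≠ 0 then ϑ_{ι_j}(∂g/∂y) = ϑ_{ι_j}(g) − e_jλ_1 for every j = 1, …, s, while if τ_0 = 0 then ϑ_{ι_j}(∂g/∂y) > ϑ_{ι_j}(g) − e_jλ_1 for every j = 1, …, s. -/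

import Mathlib

/-!
Write `E = e λ₁` for the `t`-order of the truncated parametrization `y(t)` at level `e`. The term
`a_ℓ(t^e) y(t)^ℓ` of `ι^* g` has `t`-order `e · ord a_ℓ + ℓ E`. At level `e₁` the number
`E = e₁λ₁` is coprime to `e₁` by minimality of `k₁ = e₁`, so for `ℓ < e₁` these orders are
pairwise distinct modulo `e₁`: a unique term has least order, and it alone gives `ϑ(g)`. Passing
from level `e₁` to level `e_j` multiplies every term order by `e_j / e₁`, so the same term stays
dominant. Differentiating in `y` turns the term of index `ℓ + 1` into one of index `ℓ` whose order
is smaller by exactly `E`; when the dominant index is `0` that term disappears and every remaining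
one exceeds `ϑ(g) - E`.
-/

noncomputable def psOrdQ (f : PowerSeries ℂ) : WithTop ℚ :=
  WithTop.map (fun m : ℕ => (m : ℚ)) f.order

/-- Substitution x ↦ t^e on power series (for e ≥ 1). -/
noncomputable def expandPS (e : ℕ) (f : PowerSeries ℂ) : PowerSeries ℂ :=
  PowerSeries.mk fun n => if e ∣ n then PowerSeries.coeff (n / e) f else 0

/-- Truncated parametrization pullback on ℂ[[x]][y]: x ↦ t^e, y ↦ yi. -/
noncomputable def iotaPS (e : ℕ) (yi : PowerSeries ℂ) (g : Polynomial (PowerSeries ℂ)) :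
    PowerSeries ℂ :=
  ∑ ℓ ∈ g.support, expandPS e (g.coeff ℓ) * yi ^ ℓ

open Polynomial

theorem PowerSeries.order_sum_eq_of_lt {R ι : Type*} [Semiring R] {F : Finset ι}
    {f : ι → PowerSeries R} {τ : ι} (hτ : τ ∈ F) {N : ℕ} (hN : (f τ).order = N)
    (hlt : ∀ σ ∈ F, σ ≠ τ → (N : ℕ∞) < (f σ).order) :
    (∑ σ ∈ F, f σ).order = N := by
  obtain ⟨hcoeff, hbelow⟩ := PowerSeries.order_eq_nat.mp hN
  refine PowerSeries.order_eq_nat.mpr ⟨?_, fun i hi => ?_⟩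
  · rwa [map_sum, Finset.sum_eq_single_of_mem τ hτ fun σ hσ hne =>
      PowerSeries.coeff_of_lt_order _ (hlt σ hσ hne)]
  · refine map_sum (PowerSeries.coeff i) f F ▸ Finset.sum_eq_zero fun σ hσ => ?_
    obtain rfl | hne := eq_or_ne σ τ
    · exact hbelow i hi
    · exact PowerSeries.coeff_of_lt_order _ ((Nat.cast_lt.mpr hi).trans (hlt σ hσ hne))

theorem PowerSeries.le_order_sum {R ι : Type*} [Semiring R] {F : Finset ι}
    {f : ι → PowerSeries R} {n : ℕ∞} (h : ∀ σ ∈ F, n ≤ (f σ).order) :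
    n ≤ (∑ σ ∈ F, f σ).order :=
  PowerSeries.le_order _ _ fun i hi => map_sum (PowerSeries.coeff i) f F ▸
    Finset.sum_eq_zero fun σ hσ => PowerSeries.coeff_of_lt_order _ (hi.trans_le (h σ hσ))

theorem order_expandPS {e n : ℕ} (he : 0 < e) {f : PowerSeries ℂ} (h : f.order = n) :
    (expandPS e f).order = (e * n : ℕ) := by
  obtain ⟨hcoeff, hbelow⟩ := PowerSeries.order_eq_nat.mp h
  refine PowerSeries.order_eq_nat.mpr ⟨?_, fun i hi => ?_⟩
  · simpa [expandPS, Nat.mul_div_cancel_left n he] using hcoeff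
  · simp only [expandPS, PowerSeries.coeff_mk]
    split_ifs with hdvd
    · obtain ⟨q, rfl⟩ := hdvd
      rw [Nat.mul_div_cancel_left q he]
      exact hbelow q (Nat.lt_of_mul_lt_mul_left hi)
    · rfl

theorem Polynomial.order_coe_sum_C_mul_X_pow_add {R ι : Type*} [Semiring R] {S : Finset ι}
    {c : ι → R} {E : ι → ℕ} {ψ : ι → R[X]} {ℓ₀ : ι} (hℓ₀ : ℓ₀ ∈ S) (hc : c ℓ₀ ≠ 0)
    (hE : ∀ ℓ ∈ S, ℓ ≠ ℓ₀ → E ℓ₀ < E ℓ) (hψ : ∀ ℓ ∈ S, ∀ b ∈ (ψ ℓ).support, E ℓ₀ < b) :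
    ((∑ ℓ ∈ S, (C (c ℓ) * X ^ E ℓ + ψ ℓ) : R[X]) : PowerSeries R).order = E ℓ₀ := by
  have hψ_low : ∀ ℓ ∈ S, ∀ m ≤ E ℓ₀, (ψ ℓ).coeff m = 0 := fun ℓ hℓ m hm =>
    notMem_support_iff.mp fun hb => (hψ ℓ hℓ m hb).not_ge hm
  have hcoeff : ∀ m ≤ E ℓ₀,
      (∑ ℓ ∈ S, (C (c ℓ) * X ^ E ℓ + ψ ℓ)).coeff m = if m = E ℓ₀ then c ℓ₀ else 0 := by
    intro m hm
    rw [finsetSum_coeff, Finset.sum_eq_single_of_mem ℓ₀ hℓ₀ fun ℓ hℓ hne => ?_]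
    · simp [coeff_C_mul, coeff_X_pow, hψ_low ℓ₀ hℓ₀ m hm]
    · simp [coeff_C_mul, coeff_X_pow, hψ_low ℓ hℓ m hm, (hm.trans_lt (hE ℓ hℓ hne)).ne]
  refine PowerSeries.order_eq_nat.mpr ⟨?_, fun i hi => ?_⟩ <;> rw [coeff_coe]
  · rwa [hcoeff _ le_rfl, if_pos rfl]
  · rw [hcoeff i hi.le, if_neg hi.ne]

theorem Polynomial.lt_of_mem_support_of_comp_X_pow_div {R : Type*} [CommSemiring R]
    {ψ φ : R[X]} {e e' : ℕ} (hdvd : e' ∣ e) (he : 0 < e) (hψ : ψ.comp (X ^ (e / e')) = φ)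
    {r : ℚ} (hφ : ∀ a ∈ φ.support, (e : ℚ) * r < a) : ∀ b ∈ ψ.support, (e' : ℚ) * r < b := by
  intro b hb
  have hd : 0 < e / e' := Nat.div_pos (Nat.le_of_dvd he hdvd) (Nat.pos_of_dvd_of_pos hdvd he)
  have hmem : e / e' * b ∈ φ.support := by
    rwa [← hψ, mem_support_iff, ← expand_eq_comp_X_pow, coeff_expand_mul' hd, ← mem_support_iff]
  have hsplit : (e : ℚ) = (e / e' : ℕ) * e' := by exact_mod_cast (Nat.div_mul_cancel hdvd).symm
  have := hφ _ hmem
  rw [hsplit, mul_assoc, Nat.cast_mul] at this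
  exact lt_of_mul_lt_mul_left this (by positivity)

theorem eq_of_mul_add_mul_eq_of_coprime {e E x x' σ τ : ℕ} (hcop : E.Coprime e) (hσ : σ < e)
    (hτ : τ < e) (h : e * x + σ * E = e * x' + τ * E) : σ = τ := by
  have hmod : σ * E ≡ τ * E [MOD e] := by
    simpa [Nat.ModEq, Nat.mul_add_mod] using congrArg (· % e) h
  exact (Nat.ModEq.cancel_right_of_coprime hcop.symm hmod).eq_of_lt_of_lt hσ hτ

theorem coprime_of_isLeast_mul_mem {H : AddSubgroup ℚ} (h1 : (1 : ℚ) ∈ H) {q : ℚ} {k E : ℕ}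
    (hk : IsLeast {m : ℕ | 0 < m ∧ (m : ℚ) * q ∈ H} k) (hE : (E : ℚ) = k * q) :
    E.Coprime k := by
  set d := E.gcd k
  have hk0 : 0 < k := hk.1.1
  have hd : 0 < d := Nat.gcd_pos_of_pos_right E hk0
  -- `(k / d) * q = E / d` is an integer, so minimality of `k` forces `d = 1`.
  have hmem : ((k / d : ℕ) : ℚ) * q ∈ H := by
    have : ((k / d : ℕ) : ℚ) * q = ((E / d : ℕ) : ℤ) • (1 : ℚ) := by
      rw [zsmul_eq_mul, Int.cast_natCast, Nat.cast_div (Nat.gcd_dvd_right E k) (by positivity),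
        Nat.cast_div (Nat.gcd_dvd_left E k) (by positivity), hE]
      ring
    exact this ▸ H.zsmul_mem h1 _
  have hle := hk.2 ⟨Nat.div_pos (Nat.le_of_dvd hk0 (Nat.gcd_dvd_right E k)) hd, hmem⟩
  by_contra hne
  exact (Nat.div_lt_self hk0 (by unfold Nat.Coprime at hne; omega)).not_ge hle

theorem psOrdQ_of_order_eq {f : PowerSeries ℂ} {n : ℕ} (h : f.order = n) :
    psOrdQ f = ((n : ℚ) : WithTop ℚ) := by
  rw [psOrdQ, h]
  rfl

theorem psOrdQ_eq_sub {f : PowerSeries ℂ} {T E : ℕ} (h : f.order + E = T) :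
    psOrdQ f = (((T : ℚ) - E : ℚ) : WithTop ℚ) := by
  obtain ⟨k, hk⟩ := ENat.ne_top_iff_exists.mp (show f.order ≠ ⊤ by
    rintro htop
    simp [htop] at h)
  rw [psOrdQ_of_order_eq hk.symm, ← (by exact_mod_cast hk ▸ h : k + E = T)]
  congr 1
  push_cast
  ring

theorem sub_lt_psOrdQ {f : PowerSeries ℂ} {T E : ℕ} (h : (T : ℕ∞) < f.order + E) :
    (((T : ℚ) - E : ℚ) : WithTop ℚ) < psOrdQ f := by
  by_cases htop : f.order = ⊤
  · simp only [psOrdQ, htop]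
    exact WithTop.coe_lt_top _
  obtain ⟨k, hk⟩ := ENat.ne_top_iff_exists.mp htop
  rw [psOrdQ_of_order_eq hk.symm, WithTop.coe_lt_coe, sub_lt_iff_lt_add]
  exact_mod_cast (hk ▸ h)

/-- The `t`-order of the term `a_n(t^e) y(t)^n` of `ι^* g` when `a_n ≠ 0` and `ord y = E`. -/
noncomputable def termOrder (e E : ℕ) (g : (PowerSeries ℂ)[X]) (n : ℕ) : ℕ :=
  e * (g.coeff n).order.toNat + n * E

def IsDominantIndex (e E : ℕ) (g : (PowerSeries ℂ)[X]) (τ : ℕ) : Prop :=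
  τ ∈ g.support ∧ ∀ σ ∈ g.support, σ ≠ τ → termOrder e E g τ < termOrder e E g σ

section Pullback

variable {e E : ℕ} {y : PowerSeries ℂ} {g : (PowerSeries ℂ)[X]}

theorem order_expandPS_mul_pow (he : 0 < e) (hy : y.order = E) {a : PowerSeries ℂ}
    (ha : a ≠ 0) (n : ℕ) : (expandPS e a * y ^ n).order = (e * a.order.toNat + n * E : ℕ) := by
  rw [PowerSeries.order_mul, order_expandPS he (PowerSeries.coe_toNat_order ha).symm,
    PowerSeries.order_pow, hy]
  push_cast
  ring

theorem iotaPS_C_mul_X_pow {a : PowerSeries ℂ} (ha : a ≠ 0) (n : ℕ) :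
    iotaPS e y (C a * X ^ n) = expandPS e a * y ^ n := by
  rw [iotaPS, support_C_mul_X_pow n ha, Finset.sum_singleton, coeff_C_mul_X_pow, if_pos rfl]

theorem order_iotaPS_C_mul_X_pow_coeff (he : 0 < e) (hy : y.order = E) {n : ℕ}
    (hn : g.coeff n ≠ 0) :
    (iotaPS e y (C (g.coeff n) * X ^ n)).order = termOrder e E g n := by
  rw [iotaPS_C_mul_X_pow hn, order_expandPS_mul_pow he hy hn]
  rfl

theorem order_iotaPS_of_isDominantIndex (he : 0 < e) (hy : y.order = E) {τ : ℕ}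
    (h : IsDominantIndex e E g τ) : (iotaPS e y g).order = termOrder e E g τ := by
  have hterm : ∀ σ ∈ g.support, (expandPS e (g.coeff σ) * y ^ σ).order = termOrder e E g σ :=
    fun σ hσ => order_expandPS_mul_pow he hy (mem_support_iff.mp hσ) σ
  exact PowerSeries.order_sum_eq_of_lt h.1 (hterm τ h.1) fun σ hσ hne => by
    rw [hterm σ hσ]
    exact_mod_cast h.2 σ hσ hne

theorem exists_isDominantIndex (hg : g ≠ 0) (hdeg : g.natDegree < e) (hcop : E.Coprime e) :
    ∃ τ, IsDominantIndex e E g τ := by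
  obtain ⟨τ, hτ, hmin⟩ :=
    Finset.exists_min_image g.support (termOrder e E g) (support_nonempty.mpr hg)
  have hlt : ∀ σ ∈ g.support, σ < e := fun σ hσ => (le_natDegree_of_mem_supp σ hσ).trans_lt hdeg
  exact ⟨τ, hτ, fun σ hσ hne => (hmin σ hσ).lt_of_ne fun heq =>
    hne (eq_of_mul_add_mul_eq_of_coprime hcop (hlt σ hσ) (hlt τ hτ) heq.symm)⟩

theorem IsDominantIndex.eq_of_termOrder_eq {τ σ : ℕ} (h : IsDominantIndex e E g τ)
    (hσ : σ ∈ g.support) (heq : termOrder e E g σ = termOrder e E g τ) : σ = τ := by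
  by_contra hne
  exact (h.2 σ hσ hne).ne' heq

theorem termOrder_mul_eq {e₁ E₁ : ℕ} (h : e₁ * E = e * E₁) (g : (PowerSeries ℂ)[X]) (n : ℕ) :
    e₁ * termOrder e E g n = e * termOrder e₁ E₁ g n := by
  simp only [termOrder]
  rw [mul_add, mul_add, mul_left_comm e₁ n, h]
  ring

theorem termOrder_eq_div_mul {e₁ E₁ : ℕ} (h : e₁ * E = e * E₁) (he₁ : e₁ ≠ 0)
    (g : (PowerSeries ℂ)[X]) (n : ℕ) :
    (termOrder e E g n : ℚ) = e / e₁ * termOrder e₁ E₁ g n := by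
  rw [div_mul_eq_mul_div, eq_div_iff (by exact_mod_cast he₁), mul_comm]
  exact_mod_cast termOrder_mul_eq h g n

theorem IsDominantIndex.of_mul_eq {e₁ E₁ τ : ℕ} (h : IsDominantIndex e₁ E₁ g τ) (he : 0 < e)
    (hE : e₁ * E = e * E₁) : IsDominantIndex e E g τ := by
  refine ⟨h.1, fun σ hσ hne => Nat.lt_of_mul_lt_mul_left (a := e₁) ?_⟩
  rw [termOrder_mul_eq hE, termOrder_mul_eq hE]
  exact Nat.mul_lt_mul_of_pos_left (h.2 σ hσ hne) he

theorem PowerSeries.isUnit_natCast_add_one {K : Type*} [Field K] [CharZero K] (n : ℕ) :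
    IsUnit ((n : PowerSeries K) + 1) := by
  rw [PowerSeries.isUnit_iff_constantCoeff]
  simpa using (Nat.cast_add_one_ne_zero n : ((n : K) + 1) ≠ 0)

theorem mem_support_derivative_iff {n : ℕ} :
    n ∈ (derivative g).support ↔ n + 1 ∈ g.support := by
  simp only [mem_support_iff, coeff_derivative, ne_eq,
    (PowerSeries.isUnit_natCast_add_one (K := ℂ) n).mul_left_eq_zero]

theorem termOrder_derivative (g : (PowerSeries ℂ)[X]) (n : ℕ) :
    termOrder e E (derivative g) n + E = termOrder e E g (n + 1) := by
  simp only [termOrder, coeff_derivative, PowerSeries.order_mul,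
    PowerSeries.order_zero_of_unit (PowerSeries.isUnit_natCast_add_one (K := ℂ) n), add_zero]
  ring

theorem IsDominantIndex.derivative {σ : ℕ} (h : IsDominantIndex e E g (σ + 1)) :
    IsDominantIndex e E (derivative g) σ := by
  refine ⟨mem_support_derivative_iff.mpr h.1, fun μ hμ hne => ?_⟩
  have := h.2 (μ + 1) (mem_support_derivative_iff.mp hμ) (by omega)
  rw [← termOrder_derivative, ← termOrder_derivative] at this
  omega

theorem order_iotaPS_derivative_add (he : 0 < e) (hy : y.order = E) {σ : ℕ}
    (h : IsDominantIndex e E g (σ + 1)) :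
    (iotaPS e y (derivative g)).order + E = termOrder e E g (σ + 1) := by
  rw [order_iotaPS_of_isDominantIndex he hy h.derivative, ← termOrder_derivative]
  push_cast
  rfl

theorem lt_order_iotaPS_derivative_add (he : 0 < e) (hy : y.order = E)
    (h : IsDominantIndex e E g 0) :
    (termOrder e E g 0 : ℕ∞) < (iotaPS e y (derivative g)).order + E := by
  have hle : ((termOrder e E g 0 + 1 - E : ℕ) : ℕ∞) ≤ (iotaPS e y (derivative g)).order := by
    refine PowerSeries.le_order_sum fun μ hμ => ?_
    rw [order_expandPS_mul_pow he hy (mem_support_iff.mp hμ)]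
    have hlt := h.2 (μ + 1) (mem_support_derivative_iff.mp hμ) (by omega)
    rw [← termOrder_derivative] at hlt
    exact_mod_cast (by unfold termOrder at hlt ⊢; omega)
  calc (termOrder e E g 0 : ℕ∞) < ((termOrder e E g 0 + 1 - E : ℕ) : ℕ∞) + E := by
        exact_mod_cast (by omega)
    _ ≤ _ := by gcongr

theorem psOrdQ_iotaPS_of_isDominantIndex (he : 0 < e) (hy : y.order = E) {τ : ℕ}
    (h : IsDominantIndex e E g τ) :
    psOrdQ (iotaPS e y g) = ((termOrder e E g τ : ℚ) : WithTop ℚ) ∧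
    (τ ≠ 0 → psOrdQ (iotaPS e y (derivative g)) = ((termOrder e E g τ - E : ℚ) : WithTop ℚ)) ∧
    (τ = 0 → ((termOrder e E g τ - E : ℚ) : WithTop ℚ) < psOrdQ (iotaPS e y (derivative g))) := by
  refine ⟨psOrdQ_of_order_eq (order_iotaPS_of_isDominantIndex he hy h), fun hτ => ?_, ?_⟩
  · obtain ⟨σ, rfl⟩ := Nat.exists_eq_succ_of_ne_zero hτ
    exact psOrdQ_eq_sub (order_iotaPS_derivative_add he hy h)
  · rintro rfl
    exact sub_lt_psOrdQ (lt_order_iotaPS_derivative_add he hy h)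

end Pullback

section Tower

variable {s : ℕ} {kk e : ℕ → ℕ}

theorem pos_of_eq_mul_pred (he0 : e 0 = 1) (he : ∀ i, 1 ≤ i → i ≤ s → e i = kk i * e (i - 1))
    (hkk : ∀ i, 1 ≤ i → i ≤ s → 0 < kk i) : ∀ i ≤ s, 0 < e i := by
  intro i
  induction i with
  | zero => simp [he0]
  | succ i ih =>
    intro hi
    rw [he (i + 1) (by omega) hi, Nat.add_sub_cancel]
    exact Nat.mul_pos (hkk _ (by omega) hi) (ih (by omega))

theorem dvd_of_eq_mul_pred (he : ∀ i, 1 ≤ i → i ≤ s → e i = kk i * e (i - 1)) :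
    ∀ j ≤ s, ∀ i ≤ j, e i ∣ e j := by
  intro j
  induction j with
  | zero => intro _ i hi; rw [Nat.le_zero.mp hi]
  | succ j ih =>
    intro hj i hi
    rcases hi.eq_or_lt with rfl | hlt
    · rfl
    · rw [he (j + 1) (by omega) hj, Nat.add_sub_cancel]
      exact (ih (by omega) i (by omega)).mul_left _

end Tower

theorem order_coe_sum_C_mul_X_pow_add_of_strictMonoOn {i e : ℕ} (hi : 1 ≤ i) (he : 0 < e)
    {lam : ℕ → ℚ} (hlam : StrictMonoOn lam (Set.Icc 1 i)) {c : ℕ → ℂ} (hc : c 1 ≠ 0) {E : ℕ → ℕ}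
    (hE : ∀ ℓ ∈ Finset.Icc 1 i, (E ℓ : ℚ) = e * lam ℓ) {ψ : ℕ → ℂ[X]}
    (hψ : ∀ ℓ ∈ Finset.Icc 1 i, ∀ b ∈ (ψ ℓ).support, (e : ℚ) * lam ℓ < b) :
    ((∑ ℓ ∈ Finset.Icc 1 i, (C (c ℓ) * X ^ E ℓ + ψ ℓ) : ℂ[X]) : PowerSeries ℂ).order = E 1 := by
  have h1 : 1 ∈ Finset.Icc 1 i := Finset.mem_Icc.mpr ⟨le_rfl, hi⟩
  have hlam_le : ∀ ℓ ∈ Finset.Icc 1 i, lam 1 ≤ lam ℓ := fun ℓ hℓ =>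
    hlam.monotoneOn (Finset.mem_Icc.mp h1) (Finset.mem_Icc.mp hℓ) (Finset.mem_Icc.mp hℓ).1
  have he' : (0 : ℚ) < e := by exact_mod_cast he
  refine order_coe_sum_C_mul_X_pow_add h1 hc (fun ℓ hℓ hne => ?_) (fun ℓ hℓ b hb => ?_)
  · have hlt : lam 1 < lam ℓ := hlam (Finset.mem_Icc.mp h1) (Finset.mem_Icc.mp hℓ)
      ((Finset.mem_Icc.mp hℓ).1.lt_of_ne' hne)
    have : (E 1 : ℚ) < E ℓ := by
      rw [hE 1 h1, hE ℓ hℓ]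
      exact mul_lt_mul_of_pos_left hlt he'
    exact_mod_cast this
  · have : (E 1 : ℚ) < b := by
      rw [hE 1 h1]
      exact (mul_le_mul_of_nonneg_left (hlam_le ℓ hℓ) he'.le).trans_lt (hψ ℓ hℓ b hb)
    exact_mod_cast this

theorem stmt_15_general
    (s : ℕ) (hs : 1 ≤ s)
    (lam : ℕ → ℚ)
    (hlam_mono : ∀ i, 1 ≤ i → i < s → lam i < lam (i + 1))
    (M : ℕ → AddSubgroup ℚ)
    (hM : ∀ i, M i = AddSubgroup.closure ({1} ∪ lam '' Set.Icc 1 i))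
    (kk : ℕ → ℕ)
    (hkk : ∀ i, 1 ≤ i → i ≤ s →
      IsLeast {m : ℕ | 0 < m ∧ (m : ℚ) * lam i ∈ M (i - 1)} (kk i))
    (e : ℕ → ℕ) (he0 : e 0 = 1)
    (he : ∀ i, 1 ≤ i → i ≤ s → e i = kk i * e (i - 1))
    (c : ℕ → ℂ) (hc : ∀ ℓ, 1 ≤ ℓ → ℓ ≤ s → c ℓ ≠ 0)
    (φ : ℕ → Polynomial ℂ)
    (hφord : ∀ ℓ, 1 ≤ ℓ → ℓ ≤ s → ∀ a ∈ (φ ℓ).support, (e s : ℚ) * lam ℓ < (a : ℚ))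
    (E : ℕ → ℕ → ℕ)
    (hE : ∀ i, 1 ≤ i → i ≤ s → ∀ ℓ, 1 ≤ ℓ → ℓ ≤ i → (E i ℓ : ℚ) = (e i : ℚ) * lam ℓ)
    (φs : ℕ → ℕ → Polynomial ℂ)
    (hφs : ∀ i, 1 ≤ i → i ≤ s → ∀ ℓ, 1 ≤ ℓ → ℓ ≤ i →
      (φs i ℓ).comp (Polynomial.X ^ (e s / e i)) = φ ℓ)
    (Y : ℕ → Polynomial ℂ)
    (hY : ∀ i, 1 ≤ i → i ≤ s →
      Y i = ∑ ℓ ∈ Finset.Icc 1 i, (Polynomial.C (c ℓ) * Polynomial.X ^ E i ℓ + φs i ℓ)) :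
    ∀ g : Polynomial (PowerSeries ℂ), g ≠ 0 → g.natDegree < e 1 →
      ∃ (τ : ℕ) (m : ℚ),
        τ ≤ g.natDegree ∧ g.coeff τ ≠ 0 ∧
        PowerSeries.order (iotaPS (e 1) ((Y 1 : Polynomial ℂ) : PowerSeries ℂ) g) =
          PowerSeries.order (iotaPS (e 1) ((Y 1 : Polynomial ℂ) : PowerSeries ℂ)
            (Polynomial.C (g.coeff τ) * Polynomial.X ^ τ)) ∧
        (∀ τ' ≤ g.natDegree, g.coeff τ' ≠ 0 →
          PowerSeries.order (iotaPS (e 1) ((Y 1 : Polynomial ℂ) : PowerSeries ℂ) g) =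
            PowerSeries.order (iotaPS (e 1) ((Y 1 : Polynomial ℂ) : PowerSeries ℂ)
              (Polynomial.C (g.coeff τ') * Polynomial.X ^ τ')) →
          τ' = τ) ∧
        psOrdQ (iotaPS (e 1) ((Y 1 : Polynomial ℂ) : PowerSeries ℂ) g) = (m : WithTop ℚ) ∧
        ∀ j, 1 ≤ j → j ≤ s →
          psOrdQ (iotaPS (e j) ((Y j : Polynomial ℂ) : PowerSeries ℂ) g) =
            (((e j : ℚ) / (e 1 : ℚ) * m : ℚ) : WithTop ℚ) ∧
          (τ ≠ 0 →
            psOrdQ (iotaPS (e j) ((Y j : Polynomial ℂ) : PowerSeries ℂ)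
                (Polynomial.derivative g)) =
              (((e j : ℚ) / (e 1 : ℚ) * m - (e j : ℚ) * lam 1 : ℚ) : WithTop ℚ)) ∧
          (τ = 0 →
            (((e j : ℚ) / (e 1 : ℚ) * m - (e j : ℚ) * lam 1 : ℚ) : WithTop ℚ) <
              psOrdQ (iotaPS (e j) ((Y j : Polynomial ℂ) : PowerSeries ℂ)
                (Polynomial.derivative g))) := by
  have hepos := pos_of_eq_mul_pred he0 he fun i hi his => (hkk i hi his).1.1
  have hlam : StrictMonoOn lam (Set.Icc 1 s) := strictMonoOn_of_lt_add_one Set.ordConnected_Icc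
    fun i _ hi hi' => hlam_mono i hi.1 (by have := hi'.2; omega)
  have hE1 (j : ℕ) (hj : 1 ≤ j) (hjs : j ≤ s) : (E j 1 : ℚ) = e j * lam 1 := hE j hj hjs 1 le_rfl hj
  have hcop : (E 1 1).Coprime (e 1) := by
    have he1 : e 1 = kk 1 := by rw [he 1 le_rfl hs, he0, mul_one]
    have h11 := hE1 1 le_rfl hs
    rw [he1] at h11 ⊢
    exact coprime_of_isLeast_mul_mem (hM 0 ▸ AddSubgroup.subset_closure (Or.inl rfl))
      (hkk 1 le_rfl hs) h11
  have hEj (j : ℕ) (hj : 1 ≤ j) (hjs : j ≤ s) : e 1 * E j 1 = e j * E 1 1 := by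
    exact_mod_cast (by rw [hE1 j hj hjs, hE1 1 le_rfl hs]; ring : (e 1 * E j 1 : ℚ) = e j * E 1 1)
  have hYord (j : ℕ) (hj : 1 ≤ j) (hjs : j ≤ s) :
      ((Y j : Polynomial ℂ) : PowerSeries ℂ).order = E j 1 := by
    rw [hY j hj hjs]
    refine order_coe_sum_C_mul_X_pow_add_of_strictMonoOn hj (hepos j hjs)
      (hlam.mono (Set.Icc_subset_Icc_right hjs)) (hc 1 le_rfl hs)
      (fun ℓ hℓ => hE j hj hjs ℓ (Finset.mem_Icc.mp hℓ).1 (Finset.mem_Icc.mp hℓ).2) fun ℓ hℓ => ?_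
    obtain ⟨hℓ1, hℓj⟩ := Finset.mem_Icc.mp hℓ
    exact lt_of_mem_support_of_comp_X_pow_div (dvd_of_eq_mul_pred he s le_rfl j hjs)
      (hepos s le_rfl) (hφs j hj hjs ℓ hℓ1 hℓj) (hφord ℓ hℓ1 (hℓj.trans hjs))
  intro g hg hdeg
  obtain ⟨τ, hτ⟩ := exists_isDominantIndex hg hdeg hcop
  have hτ1 := mem_support_iff.mp hτ.1
  have hordτ := order_iotaPS_of_isDominantIndex (hepos 1 hs) (hYord 1 le_rfl hs) hτ
  refine ⟨τ, termOrder (e 1) (E 1 1) g τ, le_natDegree_of_mem_supp τ hτ.1, hτ1, ?_,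
    fun τ' _ hτ' heq => ?_, psOrdQ_of_order_eq hordτ, fun j hj hjs => ?_⟩
  · rw [hordτ, order_iotaPS_C_mul_X_pow_coeff (hepos 1 hs) (hYord 1 le_rfl hs) hτ1]
  · rw [hordτ, order_iotaPS_C_mul_X_pow_coeff (hepos 1 hs) (hYord 1 le_rfl hs) hτ'] at heq
    exact hτ.eq_of_termOrder_eq (mem_support_iff.mpr hτ') (by exact_mod_cast heq.symm)
  · rw [← termOrder_eq_div_mul (hEj j hj hjs) (hepos 1 hs).ne', ← hE1 j hj hjs]
    exact psOrdQ_iotaPS_of_isDominantIndex (hepos j hjs) (hYord j hj hjs)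
      (hτ.of_mul_eq (hepos j hjs) (hEj j hj hjs))

theorem stmt_15
    (s : ℕ) (hs : 1 ≤ s)
    (lam : ℕ → ℚ) (hlam1 : 1 < lam 1)
    (hlam_mono : ∀ i, 1 ≤ i → i < s → lam i < lam (i + 1))
    (M : ℕ → AddSubgroup ℚ)
    (hM : ∀ i, M i = AddSubgroup.closure ({1} ∪ lam '' Set.Icc 1 i))
    (hlamM : ∀ i, 1 ≤ i → i ≤ s → lam i ∉ M (i - 1))
    (kk : ℕ → ℕ)
    (hkk : ∀ i, 1 ≤ i → i ≤ s →
      IsLeast {m : ℕ | 0 < m ∧ (m : ℚ) * lam i ∈ M (i - 1)} (kk i))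
    (e : ℕ → ℕ) (he0 : e 0 = 1)
    (he : ∀ i, 1 ≤ i → i ≤ s → e i = kk i * e (i - 1))
    (gam : ℕ → ℕ → ℚ)
    (hgam1 : ∀ j, 1 ≤ j → j ≤ s → gam j 1 = (e j : ℚ) * lam 1)
    (hgam : ∀ j, 1 ≤ j → j ≤ s → ∀ ℓ, 1 ≤ ℓ → ℓ ≤ j - 1 →
      gam j (ℓ + 1) = (kk ℓ : ℚ) * gam j ℓ - (e j : ℚ) * lam ℓ + (e j : ℚ) * lam (ℓ + 1))
    (c : ℕ → ℂ) (hc : ∀ ℓ, 1 ≤ ℓ → ℓ ≤ s → c ℓ ≠ 0)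
    (φ : ℕ → Polynomial ℂ)
    (hφ0 : ∀ ℓ, 1 ≤ ℓ → ℓ ≤ s → (φ ℓ).coeff 0 = 0)
    (hφsupp : ∀ ℓ, 1 ≤ ℓ → ℓ ≤ s → ∀ a ∈ (φ ℓ).support,
      ∃ m ∈ M ℓ, (a : ℚ) = (e s : ℚ) * m)
    (hφord : ∀ ℓ, 1 ≤ ℓ → ℓ ≤ s → ∀ a ∈ (φ ℓ).support, (e s : ℚ) * lam ℓ < (a : ℚ))
    (hφdeg : ∀ ℓ, 1 ≤ ℓ → ℓ < s → ∀ a ∈ (φ ℓ).support, (a : ℚ) < (e s : ℚ) * lam (ℓ + 1))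
    (E : ℕ → ℕ → ℕ)
    (hE : ∀ i, 1 ≤ i → i ≤ s → ∀ ℓ, 1 ≤ ℓ → ℓ ≤ i → (E i ℓ : ℚ) = (e i : ℚ) * lam ℓ)
    (φs : ℕ → ℕ → Polynomial ℂ)
    (hφs : ∀ i, 1 ≤ i → i ≤ s → ∀ ℓ, 1 ≤ ℓ → ℓ ≤ i →
      (φs i ℓ).comp (Polynomial.X ^ (e s / e i)) = φ ℓ)
    (Y : ℕ → Polynomial ℂ)
    (hY : ∀ i, 1 ≤ i → i ≤ s →
      Y i = ∑ ℓ ∈ Finset.Icc 1 i, (Polynomial.C (c ℓ) * Polynomial.X ^ E i ℓ + φs i ℓ)) :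
    ∀ g : Polynomial (PowerSeries ℂ), g ≠ 0 → g.natDegree < e 1 →
      ∃ (τ : ℕ) (m : ℚ),
        τ ≤ g.natDegree ∧ g.coeff τ ≠ 0 ∧
        PowerSeries.order (iotaPS (e 1) ((Y 1 : Polynomial ℂ) : PowerSeries ℂ) g) =
          PowerSeries.order (iotaPS (e 1) ((Y 1 : Polynomial ℂ) : PowerSeries ℂ)
            (Polynomial.C (g.coeff τ) * Polynomial.X ^ τ)) ∧
        (∀ τ' ≤ g.natDegree, g.coeff τ' ≠ 0 →
          PowerSeries.order (iotaPS (e 1) ((Y 1 : Polynomial ℂ) : PowerSeries ℂ) g) =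
            PowerSeries.order (iotaPS (e 1) ((Y 1 : Polynomial ℂ) : PowerSeries ℂ)
              (Polynomial.C (g.coeff τ') * Polynomial.X ^ τ')) →
          τ' = τ) ∧
        psOrdQ (iotaPS (e 1) ((Y 1 : Polynomial ℂ) : PowerSeries ℂ) g) = (m : WithTop ℚ) ∧
        ∀ j, 1 ≤ j → j ≤ s →
          psOrdQ (iotaPS (e j) ((Y j : Polynomial ℂ) : PowerSeries ℂ) g) =
            (((e j : ℚ) / (e 1 : ℚ) * m : ℚ) : WithTop ℚ) ∧
          (τ ≠ 0 →
            psOrdQ (iotaPS (e j) ((Y j : Polynomial ℂ) : PowerSeries ℂ)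
                (Polynomial.derivative g)) =
              (((e j : ℚ) / (e 1 : ℚ) * m - (e j : ℚ) * lam 1 : ℚ) : WithTop ℚ)) ∧
          (τ = 0 →
            (((e j : ℚ) / (e 1 : ℚ) * m - (e j : ℚ) * lam 1 : ℚ) : WithTop ℚ) <
              psOrdQ (iotaPS (e j) ((Y j : Polynomial ℂ) : PowerSeries ℂ)
                (Polynomial.derivative g))) :=
  stmt_15_general s hs lam hlam_mono M hM kk hkk e he0 he c hc φ hφord E hE φs hφs Y hY
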